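/- In the Section 7 setting, suppose Γ' is a signed GKM structure on the underlying graph of Γ inducing the same unsigned GKM graph as Γ in which the labels of the basic edges f_i and h_i never agree, normalized (after applying the automorphism interchanging the rows) so that f_i carries label −γ_i for i < j, label γ_i for i ≥ j, and h_i the opposite, where j is the unique index at which k_j ≠ k_{j−1} among the signs ±1. Then the signs of the weights α'_i of the fiber edges g_i are uniquely determined by the existence of a compatible connection: α'_j = −γ_{j−1} − γ_j, α'_i = γ_{i−1} − γ_i for i = j+1,…,n, and α'_i = −γ_{i−1} + γ_i for i = 1,…,j−1. Consequently, Γ' is unique up to isomorphism of signed GKM graphs, and every vertex of Γ' is interior. -/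

import Mathlib

open Classical

namespace GKMPaper

/-- `ℤ^m`, the weight lattice. -/
abbrev Zm (m : ℕ) := Fin m → ℤ

/-- The relation identifying a vector with its negative. -/
def pmRel (m : ℕ) (a b : Zm m) : Prop := a = b ∨ a = -b

theorem pmRel_equiv (m : ℕ) : Equivalence (pmRel m) := by
  constructor
  · intro a; exact Or.inl rfl
  · intro a b hab
    rcases hab with hh | hh
    · exact Or.inl hh.symm
    · exact Or.inr (by rw [hh, neg_neg])
  · intro a b c h1 h2
    rcases h1 with h1 | h1 <;> rcases h2 with h2 | h2
    · exact Or.inl (h1.trans h2)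
    · exact Or.inr (h1.trans h2)
    · exact Or.inr (by rw [h1, h2])
    · exact Or.inl (by rw [h1, h2, neg_neg])

def pmSetoid (m : ℕ) : Setoid (Zm m) := ⟨pmRel m, pmRel_equiv m⟩

/-- `ℤ^m / ±1`. -/
def ZmPM (m : ℕ) := Quotient (pmSetoid m)

/-- The projection `ℤ^m → ℤ^m/±1`. -/
def pm {m : ℕ} (a : Zm m) : ZmPM m := Quotient.mk (pmSetoid m) a

/-- Linear independence over `ℤ`. -/
def Indep {m : ℕ} (a b : Zm m) : Prop :=
  ∀ c d : ℤ, c • a + d • b = 0 → c = 0 ∧ d = 0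

/-- An abstract graph with finite vertex and edge sets, each edge occurring with
both orientations, and no loops. -/
structure OrGraph : Type 1 where
  V : Type
  E : Type
  fV : Fintype V
  fE : Fintype E
  dV : DecidableEq V
  dE : DecidableEq E
  src : E → V
  dst : E → V
  rev : E → E
  rev_rev : ∀ e, rev (rev e) = e
  rev_ne : ∀ e, rev e ≠ e
  src_rev : ∀ e, src (rev e) = dst e
  no_loop : ∀ e, src e ≠ dst e

attribute [instance] OrGraph.fV OrGraph.fE OrGraph.dV OrGraph.dE

/-- A connection on a graph. -/
structure Connection (G : OrGraph) where
  t : G.E → G.E → G.E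
  src_t : ∀ e f, G.src f = G.src e → G.src (t e f) = G.dst e
  t_self : ∀ e, t e e = G.rev e
  t_inv : ∀ e f, G.src f = G.src e → t (G.rev e) (t e f) = f

/-- `k`-valence. -/
def OrGraph.Regular (G : OrGraph) (k : ℕ) : Prop :=
  ∀ v : G.V, Fintype.card {e : G.E // G.src e = v} = k

def OrGraph.Adj (G : OrGraph) (v w : G.V) : Prop :=
  ∃ e, G.src e = v ∧ G.dst e = w

def OrGraph.IsConn (G : OrGraph) : Prop :=
  ∀ v w : G.V, Relation.ReflTransGen G.Adj v w

/-- Compatibility of a connection with an unsigned axial function. -/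
def UnsignedCompat {m : ℕ} (G : OrGraph) (α : G.E → ZmPM m) (C : Connection G) : Prop :=
  (∀ e f : G.E, G.src f = G.src e → e ≠ f →
      ∀ a b : Zm m, pm a = α e → pm b = α f → Indep a b) ∧
  (∀ e f : G.E, G.src f = G.src e →
      ∃ (a g : Zm m) (c : ℤ), pm a = α f ∧ pm g = α e ∧ α (C.t e f) = pm (a + c • g)) ∧
  (∀ e : G.E, α (G.rev e) = α e)

/-- `(G, α)` is an (unsigned) abstract GKM graph of valence `k` with labels in `ℤ^m/±1`. -/
def IsGKM {m : ℕ} (G : OrGraph) (k : ℕ) (α : G.E → ZmPM m) : Prop :=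
  G.Regular k ∧ G.IsConn ∧ ∃ C : Connection G, UnsignedCompat G α C

/-- Compatibility of a connection with a signed axial function. -/
def SignedCompat {m : ℕ} (G : OrGraph) (α : G.E → Zm m) (C : Connection G) : Prop :=
  (∀ e f : G.E, G.src f = G.src e → e ≠ f → Indep (α e) (α f)) ∧
  (∀ e f : G.E, G.src f = G.src e → ∃ c : ℤ, α (C.t e f) = α f + c • α e) ∧
  (∀ e : G.E, α (G.rev e) = - α e)

/-- `(G, α)` is a signed abstract GKM graph of valence `k` with labels in `ℤ^m`. -/
def IsSignedGKM {m : ℕ} (G : OrGraph) (k : ℕ) (α : G.E → Zm m) : Prop :=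
  G.Regular k ∧ G.IsConn ∧ ∃ C : Connection G, SignedCompat G α C

/-- Effectivity of an unsigned GKM graph: at every vertex, the labels of the
outgoing edges lift to a generating set of `ℤ^m`. -/
def Effective {m : ℕ} (G : OrGraph) (α : G.E → ZmPM m) : Prop :=
  ∀ v : G.V, ∃ lift : {e : G.E // G.src e = v} → Zm m,
    (∀ e, pm (lift e) = α e.1) ∧ Submodule.span ℤ (Set.range lift) = ⊤

def SignedEffective {m : ℕ} (G : OrGraph) (α : G.E → Zm m) : Prop :=
  ∀ v : G.V,
    Submodule.span ℤ (Set.range (fun e : {e : G.E // G.src e = v} => α e.1)) = ⊤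

/-- A graph fibration: a morphism sending vertices to vertices and horizontal
edges to edges, bijectively from the horizontal edges at `p` to the edges at `π(p)`. -/
structure GraphFib (G B : OrGraph) where
  onV : G.V → B.V
  onE : G.E → B.E
  src_onE : ∀ e, onV (G.src e) ≠ onV (G.dst e) → B.src (onE e) = onV (G.src e)
  dst_onE : ∀ e, onV (G.src e) ≠ onV (G.dst e) → B.dst (onE e) = onV (G.dst e)
  rev_onE : ∀ e, onV (G.src e) ≠ onV (G.dst e) → onE (G.rev e) = B.rev (onE e)

def GraphFib.Vertical {G B : OrGraph} (π : GraphFib G B) (e : G.E) : Prop :=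
  π.onV (G.src e) = π.onV (G.dst e)

def GraphFib.IsFib {G B : OrGraph} (π : GraphFib G B) : Prop :=
  ∀ p : G.V, Function.Bijective
    (fun e : {e : G.E // G.src e = p ∧ ¬ π.Vertical e} =>
      (⟨π.onE e.1, by rw [π.src_onE e.1 e.2.2, e.2.1]⟩ : {f : B.E // B.src f = π.onV p}))

/-- The extra conditions for a (unsigned) GKM fibration, w.r.t. connections `C`, `CB`. -/
def GKMFibCompat {m : ℕ} {G B : OrGraph} (αΓ : G.E → ZmPM m) (αB : B.E → ZmPM m)
    (π : GraphFib G B) (C : Connection G) (CB : Connection B) : Prop :=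
  (∀ e, ¬ π.Vertical e → αΓ e = αB (π.onE e)) ∧
  (∀ e f, G.src f = G.src e → π.Vertical f → π.Vertical (C.t e f)) ∧
  (∀ e f, G.src f = G.src e → ¬ π.Vertical e → ¬ π.Vertical f →
      ¬ π.Vertical (C.t e f) ∧ π.onE (C.t e f) = CB.t (π.onE e) (π.onE f))

/-- `π` is a GKM fibration of unsigned GKM graphs. -/
def IsGKMFib {m : ℕ} {G B : OrGraph} (αΓ : G.E → ZmPM m) (αB : B.E → ZmPM m)
    (π : GraphFib G B) : Prop :=
  π.IsFib ∧ ∃ (C : Connection G) (CB : Connection B),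
    UnsignedCompat G αΓ C ∧ UnsignedCompat B αB CB ∧ GKMFibCompat αΓ αB π C CB

def SignedGKMFibCompat {m : ℕ} {G B : OrGraph} (sΓ : G.E → Zm m) (sB : B.E → Zm m)
    (π : GraphFib G B) (C : Connection G) (CB : Connection B) : Prop :=
  (∀ e, ¬ π.Vertical e → sΓ e = sB (π.onE e)) ∧
  (∀ e f, G.src f = G.src e → π.Vertical f → π.Vertical (C.t e f)) ∧
  (∀ e f, G.src f = G.src e → ¬ π.Vertical e → ¬ π.Vertical f →
      ¬ π.Vertical (C.t e f) ∧ π.onE (C.t e f) = CB.t (π.onE e) (π.onE f))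

/-- `π` is a signed GKM fibration of signed GKM graphs. -/
def IsSignedGKMFib {m : ℕ} {G B : OrGraph} (sΓ : G.E → Zm m) (sB : B.E → Zm m)
    (π : GraphFib G B) : Prop :=
  π.IsFib ∧ ∃ (C : Connection G) (CB : Connection B),
    SignedCompat G sΓ C ∧ SignedCompat B sB CB ∧ SignedGKMFibCompat sΓ sB π C CB

/-- `(π, ft)` is a fiberwise signed fibration: `ft` is a lift of `αΓ` on the
vertical edges, satisfying the congruence condition w.r.t. suitable connections. -/
def IsFiberwiseSigned {m : ℕ} {G B : OrGraph} (αΓ : G.E → ZmPM m) (αB : B.E → ZmPM m)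
    (π : GraphFib G B) (ft : G.E → Zm m) : Prop :=
  π.IsFib ∧
  (∀ e, π.Vertical e → pm (ft e) = αΓ e) ∧
  (∀ e, π.Vertical e → ft (G.rev e) = - ft e) ∧
  ∃ (C : Connection G) (CB : Connection B),
    UnsignedCompat G αΓ C ∧ UnsignedCompat B αB CB ∧ GKMFibCompat αΓ αB π C CB ∧
    ∀ e f, G.src f = G.src e → π.Vertical f →
      ∃ (g : Zm m) (c : ℤ), pm g = αΓ e ∧ ft (C.t e f) = ft f + c • g

/-- Isomorphism of unsigned GKM graphs. -/
structure GKMIso {m : ℕ} (G : OrGraph) (α : G.E → ZmPM m)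
    (G' : OrGraph) (α' : G'.E → ZmPM m) : Type where
  fV : G.V ≃ G'.V
  fE : G.E ≃ G'.E
  φ : Zm m ≃ₗ[ℤ] Zm m
  src_comm : ∀ e, G'.src (fE e) = fV (G.src e)
  dst_comm : ∀ e, G'.dst (fE e) = fV (G.dst e)
  rev_comm : ∀ e, fE (G.rev e) = G'.rev (fE e)
  lab : ∀ (e : G.E) (a : Zm m), pm a = α e → α' (fE e) = pm (φ a)

/-- Isomorphism of signed GKM graphs. -/
structure SignedGKMIso {m : ℕ} (G : OrGraph) (α : G.E → Zm m)
    (G' : OrGraph) (α' : G'.E → Zm m) : Type where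
  fV : G.V ≃ G'.V
  fE : G.E ≃ G'.E
  φ : Zm m ≃ₗ[ℤ] Zm m
  src_comm : ∀ e, G'.src (fE e) = fV (G.src e)
  dst_comm : ∀ e, G'.dst (fE e) = fV (G.dst e)
  rev_comm : ∀ e, fE (G.rev e) = G'.rev (fE e)
  lab : ∀ e, α' (fE e) = φ (α e)

/-- Equivalence of fiberwise signed fibrations over the same base (identity on `ℤ^m`). -/
structure FSFEquiv {m : ℕ} {G B G' : OrGraph}
    (αΓ : G.E → ZmPM m) (π : GraphFib G B) (ft : G.E → Zm m)
    (αΓ' : G'.E → ZmPM m) (π' : GraphFib G' B) (ft' : G'.E → Zm m) : Type where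
  fV : G.V ≃ G'.V
  fE : G.E ≃ G'.E
  src_comm : ∀ e, G'.src (fE e) = fV (G.src e)
  dst_comm : ∀ e, G'.dst (fE e) = fV (G.dst e)
  rev_comm : ∀ e, fE (G.rev e) = G'.rev (fE e)
  lab : ∀ e, αΓ' (fE e) = αΓ e
  baseV : ∀ p, π'.onV (fV p) = π.onV p
  baseE : ∀ e, ¬ π.Vertical e → π'.onE (fE e) = π.onE e
  fiblab : ∀ e, π.Vertical e → ft' (fE e) = ft e

/-- Equivalence of signed GKM fibrations over the same base (identity on `ℤ^m`). -/
structure SFEquiv {m : ℕ} {G B G' : OrGraph}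
    (sΓ : G.E → Zm m) (π : GraphFib G B)
    (sΓ' : G'.E → Zm m) (π' : GraphFib G' B) : Type where
  fV : G.V ≃ G'.V
  fE : G.E ≃ G'.E
  src_comm : ∀ e, G'.src (fE e) = fV (G.src e)
  dst_comm : ∀ e, G'.dst (fE e) = fV (G.dst e)
  rev_comm : ∀ e, fE (G.rev e) = G'.rev (fE e)
  lab : ∀ e, sΓ' (fE e) = sΓ e
  baseV : ∀ p, π'.onV (fV p) = π.onV p
  baseE : ∀ e, ¬ π.Vertical e → π'.onE (fE e) = π.onE e

/-- Realizing `ℤ²` inside `ℝ² = ℂ`. -/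
noncomputable def toC (a : Zm 2) : ℂ := (a 0 : ℝ) + (a 1 : ℝ) * Complex.I

def cross (a b : ℂ) : ℝ := a.re * b.im - a.im * b.re

/-- A vertex of a signed GKM graph with labels in `ℤ²` is interior if the cone
spanned by the labels of the edges emanating from it is all of `ℝ²`. -/
def InteriorVtx (G : OrGraph) (α : G.E → Zm 2) (p : G.V) : Prop :=
  ∀ x : ℂ, ∃ c : G.E → ℝ, (∀ e, 0 ≤ c e) ∧
    x = ∑ e ∈ Finset.univ.filter (fun e : G.E => G.src e = p), c e • toC (α e)

/-- The angle from `w` to `w'`, represented in `[0, 2π)` if `ε = true`,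
and in `(-2π, 0]` if `ε = false`. -/
noncomputable def angTo (ε : Bool) (w w' : ℂ) : ℝ :=
  if ε then (if (w' / w).arg < 0 then (w' / w).arg + 2 * Real.pi else (w' / w).arg)
  else (if 0 < (w' / w).arg then (w' / w).arg - 2 * Real.pi else (w' / w).arg)

/-- The winding number of a cyclic sequence of vectors w.r.t. the orientation `ε`. -/
noncomputable def winding {nn : ℕ} [NeZero nn] (w : ZMod nn → ℂ) (ε : Bool) : ℝ :=
  (1 / (2 * Real.pi)) * ∑ i : ZMod nn, |angTo ε (w i) (w (i + 1))|

def LocallyConvex {nn : ℕ} (w : ZMod nn → ℂ) : Prop :=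
  (∀ i, angTo true (w i) (w (i + 1)) ∈ Set.Ioo 0 Real.pi) ∨
  (∀ i, angTo false (w i) (w (i + 1)) ∈ Set.Ioo (-Real.pi) 0)

/-- `ε` is the preferred orientation of the locally convex sequence `w`. -/
def Preferred {nn : ℕ} (w : ZMod nn → ℂ) (ε : Bool) : Prop :=
  (ε = true ∧ ∀ i, angTo true (w i) (w (i + 1)) ∈ Set.Ioo 0 Real.pi) ∨
  (ε = false ∧ ∀ i, angTo false (w i) (w (i + 1)) ∈ Set.Ioo (-Real.pi) 0)

/-- `P` lists the vertices of a strictly convex polygon in cyclic order. -/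
def ConvexCyclic {nn : ℕ} (P : ZMod nn → ℂ) : Prop :=
  (∀ i j, j ≠ i → j ≠ i + 1 → 0 < cross (P (i + 1) - P i) (P j - P i)) ∨
  (∀ i j, j ≠ i → j ≠ i + 1 → cross (P (i + 1) - P i) (P j - P i) < 0)

def SubAdj (G : OrGraph) (S : Set G.E) (v w : G.V) : Prop :=
  ∃ e ∈ S, G.src e = v ∧ G.dst e = w

/-- `S` is (the edge set of) a connected `2`-valent signed GKM subgraph of `(G, α)`. -/
def IsSigned2ValentSub (G : OrGraph) (α : G.E → Zm 2) (S : Set G.E) : Prop :=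
  S.Nonempty ∧
  (∀ e ∈ S, G.rev e ∈ S) ∧
  (∀ v : G.V, (∃ e ∈ S, G.src e = v) → Nat.card {e : G.E // e ∈ S ∧ G.src e = v} = 2) ∧
  (∀ v w : G.V, (∃ e ∈ S, G.src e = v) → (∃ e ∈ S, G.src e = w) →
      Relation.ReflTransGen (SubAdj G S) v w) ∧
  ∃ T : G.E → G.E → G.E,
    (∀ e f, e ∈ S → f ∈ S → G.src f = G.src e → T e f ∈ S ∧ G.src (T e f) = G.dst e) ∧
    (∀ e, e ∈ S → T e e = G.rev e) ∧
    (∀ e f, e ∈ S → f ∈ S → G.src f = G.src e → T (G.rev e) (T e f) = f) ∧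
    (∀ e f, e ∈ S → f ∈ S → G.src f = G.src e → ∃ c : ℤ, α (T e f) = α f + c • α e)

/-- A `2`-valent signed GKM subgraph of polytope type: it is a cycle realized by the
boundary edges of a simple convex `2`-polytope, with labels representing the slopes. -/
def IsPolytopeTypeSub (G : OrGraph) (α : G.E → Zm 2) (S : Set G.E) : Prop :=
  IsSigned2ValentSub G α S ∧
  ∃ np : ℕ, 3 ≤ np ∧
    ∃ (cyc : ZMod np → G.E) (P : ZMod np → ℂ) (t : ZMod np → ℝ),
      (∀ i, cyc i ∈ S) ∧
      (∀ ed ∈ S, ∃ i, ed = cyc i ∨ ed = G.rev (cyc i)) ∧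
      (∀ i, G.dst (cyc i) = G.src (cyc (i + 1))) ∧
      ConvexCyclic P ∧
      (∀ i, 0 < t i) ∧
      (∀ i, P (i + 1) - P i = t i • toC (α (cyc i)))

/-- A fibration over an `n`-gon base is of product type if the lifts of a path
once around the base are closed. -/
def ProductType {G B : OrGraph} (π : GraphFib G B) {nn : ℕ} (eB : ZMod nn → B.E) : Prop :=
  ∃ l : ZMod nn → G.E,
    ∀ i, ¬ π.Vertical (l i) ∧ π.onE (l i) = eB i ∧ G.dst (l i) = G.src (l (i + 1))

/-- `ℤ`-indexed `n`-gon data for a `2`-valent base graph. -/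
structure ZGonData (B : OrGraph) (n : ℕ) where
  v : ℤ → B.V
  eB : ℤ → B.E
  v_per : ∀ i, v (i + n) = v i
  e_per : ∀ i, eB (i + n) = eB i
  src_e : ∀ i, B.src (eB i) = v i
  dst_e : ∀ i, B.dst (eB i) = v (i + 1)
  v_inj : ∀ i j : ℤ, 0 ≤ i → i < n → 0 ≤ j → j < n → v i = v j → i = j
  v_surj : ∀ w : B.V, ∃ i : ℤ, v i = w
  e_cover : ∀ ed : B.E, ∃ i : ℤ, ed = eB i ∨ ed = B.rev (eB i)

/-- A choice of sign representatives `γ_i` of the base labels with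
`γ_i ≡ -γ_{i+2} (mod γ_{i+1})` for all `i ∈ ℤ`. -/
structure GammaData {B : OrGraph} {n : ℕ} (αB : B.E → ZmPM 2) (D : ZGonData B n) where
  γ : ℤ → Zm 2
  lift : ∀ i, pm (γ i) = αB (D.eB i)
  cong : ∀ i, ∃ c : ℤ, γ i + γ (i + 2) = c • γ (i + 1)

/-- A fiberwise signed `3`-valent GKM fibration over `(B, αB)`. -/
structure FSFOver (B : OrGraph) (αB : B.E → ZmPM 2) : Type 1 where
  G : OrGraph
  αΓ : G.E → ZmPM 2
  hΓ : IsGKM G 3 αΓ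
  π : GraphFib G B
  ft : G.E → Zm 2
  isfs : IsFiberwiseSigned αΓ αB π ft

def FSFOver.Equiv {B : OrGraph} {αB : B.E → ZmPM 2} (F F' : FSFOver B αB) : Prop :=
  Nonempty (FSFEquiv F.αΓ F.π F.ft F'.αΓ F'.π F'.ft)

/-- A signed `3`-valent GKM fibration over the signed graph `(B, sB)`. -/
structure SFOver (B : OrGraph) (sB : B.E → Zm 2) : Type 1 where
  G : OrGraph
  sΓ : G.E → Zm 2
  hΓ : IsSignedGKM G 3 sΓ
  π : GraphFib G B
  issf : IsSignedGKMFib sΓ sB π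

def SFOver.Equiv {B : OrGraph} {sB : B.E → Zm 2} (F F' : SFOver B sB) : Prop :=
  Nonempty (SFEquiv F.sΓ F.π F'.sΓ F'.π)

/-- The fibration `F` realizes the classification datum `([k], η)` w.r.t. the fixed data. -/
def RealizesFS {B : OrGraph} {αB : B.E → ZmPM 2} {n : ℕ} (D : ZGonData B n)
    (Γd : GammaData αB D) (F : FSFOver B αB) (k : ZMod n → ℤ) (η : Bool) : Prop :=
  (η = false ↔ ProductType F.π (fun i : ZMod n => D.eB i.val)) ∧
  ∃ (gE : ℤ → F.G.E) (αf : ℤ → Zm 2) (kk : ℤ → ℤ),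
    (∀ i, F.π.Vertical (gE i)) ∧
    (∀ i, F.π.onV (F.G.src (gE i)) = D.v i) ∧
    (∀ i, gE (i + n) = gE i ∨ gE (i + n) = F.G.rev (gE i)) ∧
    (∀ i, pm (αf i) = F.αΓ (gE i)) ∧
    (∀ i, ∃ c : ℤ, αf (i + 1) = αf i + c • Γd.γ i) ∧
    (∀ i, αf i = kk i • Γd.γ (i - 1) - kk (i - 1) • Γd.γ i) ∧
    (∀ i, kk i ≠ 0) ∧
    (∀ i : ZMod n, k i = kk i.val)

/-- The signed fibration `F` realizes the classification datum `([k], η)`. -/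
def RealizesS {B : OrGraph} (sB : B.E → Zm 2) {αB : B.E → ZmPM 2} {n : ℕ}
    (D : ZGonData B n) (Γd : GammaData αB D) (F : SFOver B sB)
    (k : ZMod n → ℤ) (η : Bool) : Prop :=
  (η = false ↔ ProductType F.π (fun i : ZMod n => D.eB i.val)) ∧
  ∃ (gE : ℤ → F.G.E) (αf : ℤ → Zm 2) (kk : ℤ → ℤ),
    (∀ i, F.π.Vertical (gE i)) ∧
    (∀ i, F.π.onV (F.G.src (gE i)) = D.v i) ∧
    (∀ i, gE (i + n) = gE i ∨ gE (i + n) = F.G.rev (gE i)) ∧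
    (∀ i, pm (αf i) = pm (F.sΓ (gE i))) ∧
    (∀ i, ∃ c : ℤ, αf (i + 1) = αf i + c • Γd.γ i) ∧
    (∀ i, αf i = kk i • Γd.γ (i - 1) - kk (i - 1) • Γd.γ i) ∧
    (∀ i, kk i ≠ 0) ∧
    (∀ i : ZMod n, k i = kk i.val)

def KRel (n : ℕ) (a b : {k : ZMod n → ℤ // ∀ i, k i ≠ 0}) : Prop :=
  a.1 = b.1 ∨ a.1 = - b.1

/-- `((ℤ∖{0})^n)/±1`. -/
def KClass (n : ℕ) := Quot (KRel n)

/-- The Section 7 setting: a signed GKM fibration of twisted type of a `3`-valent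
signed GKM graph `Γ` over `B`, the boundary of a 2-dimensional Delzant polytope with
`n` vertices, with `Γ` having `n-1` interior vertices; with the basic edges `f i`, `h i`
over `e i` and the fiber edges `g i`. -/
structure Section7 : Type 1 where
  n : ℕ
  hn : 3 ≤ n
  G : OrGraph
  B : OrGraph
  aG : G.E → Zm 2
  aB : B.E → Zm 2
  hG : IsSignedGKM G 3 aG
  hB : IsSignedGKM B 2 aB
  π : GraphFib G B
  hfib : IsSignedGKMFib aG aB π
  v : ZMod n → B.V
  e : ZMod n → B.E
  v_bij : Function.Bijective v
  src_e : ∀ i, B.src (e i) = v i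
  dst_e : ∀ i, B.dst (e i) = v (i + 1)
  e_cover : ∀ ed : B.E, ∃ i, ed = e i ∨ ed = B.rev (e i)
  P : ZMod n → ℂ
  tl : ZMod n → ℝ
  tl_pos : ∀ i, 0 < tl i
  polygon : ConvexCyclic P
  slope : ∀ i, P (i + 1) - P i = tl i • toC (aB (e i))
  delzant : ∀ i, (aB (e (i - 1)) 0) * (aB (e i) 1) - (aB (e (i - 1)) 1) * (aB (e i) 0) = 1 ∨
                 (aB (e (i - 1)) 0) * (aB (e i) 1) - (aB (e (i - 1)) 1) * (aB (e i) 0) = -1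
  f : ZMod n → G.E
  h : ZMod n → G.E
  g : ZMod n → G.E
  f_horiz : ∀ i, ¬ π.Vertical (f i)
  h_horiz : ∀ i, ¬ π.Vertical (h i)
  f_over : ∀ i, π.onE (f i) = e i
  h_over : ∀ i, π.onE (h i) = e i
  f_ne_h : ∀ i, f i ≠ h i
  g_vert : ∀ i, π.Vertical (g i)
  g_src : ∀ i, G.src (g i) = G.src (f i)
  g_dst : ∀ i, G.dst (g i) = G.src (h i)
  chain_f : ∀ i : ZMod n, i + 1 ≠ 0 → G.dst (f i) = G.src (f (i + 1))
  chain_h : ∀ i : ZMod n, i + 1 ≠ 0 → G.dst (h i) = G.src (h (i + 1))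
  twist_f : G.dst (f (-1)) = G.src (h 0)
  twist_h : G.dst (h (-1)) = G.src (f 0)
  k : ZMod n → ℤ
  k_ne : ∀ i, k i ≠ 0
  fiberweight : ∀ i, aG (g i) =
    k i • aB (e (i - 1)) - (if i = 0 then - k (i - 1) else k (i - 1)) • aB (e i)
  interior_count : Nat.card {p : G.V // InteriorVtx G aG p} = n - 1

/-- The type II signed structure: the signs of the labels of every second pair
of basic edges are reversed. -/
noncomputable def Section7.alphaII (S : Section7) : S.G.E → Zm 2 :=
  fun ed =>
    if ∃ i : ZMod S.n, Odd i.val ∧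
        (ed = S.f i ∨ ed = S.h i ∨ ed = S.G.rev (S.f i) ∨ ed = S.G.rev (S.h i))
    then - S.aG ed else S.aG ed

/-!
Along any edge `e` a compatible connection matches the edges at the two endpoints and changes
labels by multiples of the label of `e`, so the sums of the labels at the two endpoints differ
by a multiple of it. For a type III structure the sum at `q i` is minus the sum at `p i`.
Writing the labels of `f i` and `g i` as signs times those of `Γ`, transport along `g i` shows
that the signs of the `f i` are `u * k i` for a global sign `u`, and transport along `f i`
shows that `k i * k_{i-1} - u * (sign of g i)` does not depend on `i`. As `k i * k_{i-1}` is
`-1` exactly at `j`, this constant is `0`, which says that the labels at every vertex sum to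
zero. This determines the label of `g i` from those of `f (i - 1)` and `f i`, makes every
vertex interior (three labels summing to zero, two of them independent), and shows that two
type III structures differ by the global sign `u`.
-/

lemma pm_eq_pm_iff {m : ℕ} {a b : Zm m} : pm a = pm b ↔ a = b ∨ a = -b := Quotient.eq

def det2 : Zm 2 →ₗ[ℤ] Zm 2 →ₗ[ℤ] ℤ :=
  LinearMap.mk₂ ℤ (fun a b => a 0 * b 1 - a 1 * b 0)
    (fun _ _ _ => by simp only [Pi.add_apply]; ring)
    (fun _ _ _ => by simp only [Pi.smul_apply, smul_eq_mul]; ring)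
    (fun _ _ _ => by simp only [Pi.add_apply]; ring)
    (fun _ _ _ => by simp only [Pi.smul_apply, smul_eq_mul]; ring)

lemma det2_apply (a b : Zm 2) : det2 a b = a 0 * b 1 - a 1 * b 0 := rfl

@[simp] lemma det2_self (a : Zm 2) : det2 a a = 0 := by
  rw [det2_apply]; ring

lemma det2_swap (a b : Zm 2) : det2 b a = -det2 a b := by
  rw [det2_apply, det2_apply]; ring

lemma Indep.det2_ne_zero {a b : Zm 2} (h : Indep a b) : det2 a b ≠ 0 := by
  intro hd
  rw [det2_apply] at hd
  have h1 := h (b 1) (-a 1) (by ext i; fin_cases i <;> simp <;> linarith)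
  have h0 := h (b 0) (-a 0) (by ext i; fin_cases i <;> simp <;> linarith)
  have ha : a = 0 := by ext i; fin_cases i <;> simp <;> linarith [h0.2, h1.2]
  exact one_ne_zero (h 1 0 (by simp [ha])).1

lemma OrGraph.dst_rev (G : OrGraph) (e : G.E) : G.dst (G.rev e) = G.src e := by
  rw [← G.src_rev, G.rev_rev]

lemma OrGraph.filter_src_eq {G : OrGraph} {k : ℕ} (hG : G.Regular k) {v : G.V} {s : Finset G.E}
    (hs : ∀ e ∈ s, G.src e = v) (hcard : s.card = k) :
    Finset.univ.filter (fun e => G.src e = v) = s := by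
  symm
  refine Finset.eq_of_subset_of_card_le (fun e he => by simpa using hs e he) ?_
  rw [hcard, ← hG v, Fintype.card_subtype]

def vertexSum {m : ℕ} (G : OrGraph) (α : G.E → Zm m) (v : G.V) : Zm m :=
  ∑ e ∈ Finset.univ.filter (fun e => G.src e = v), α e

/-- Transport along `e` is a bijection between the edges at its two ends that changes
labels by multiples of `α e`, so the label sums at the two ends differ by such a multiple. -/
lemma SignedCompat.exists_vertexSum_dst {m : ℕ} {G : OrGraph} {α : G.E → Zm m}
    {C : Connection G} (hα : SignedCompat G α C) (e : G.E) :
    ∃ c : ℤ, vertexSum G α (G.dst e) = vertexSum G α (G.src e) + c • α e := by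
  have : ∀ f, ∃ c : ℤ, G.src f = G.src e → α (C.t e f) = α f + c • α e := fun f =>
    if hf : G.src f = G.src e then (hα.2.1 e f hf).imp fun _ h _ => h else ⟨0, fun h => (hf h).elim⟩
  choose c hc using this
  refine ⟨∑ f ∈ Finset.univ.filter (fun f => G.src f = G.src e), c f, ?_⟩
  have hrev : G.src (G.rev e) = G.dst e := G.src_rev e
  calc vertexSum G α (G.dst e)
      = ∑ f ∈ Finset.univ.filter (fun f => G.src f = G.src e), α (C.t e f) := by
        symm
        refine Finset.sum_nbij' (C.t e) (C.t (G.rev e)) ?_ ?_ ?_ ?_ (fun _ _ => rfl) <;>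
          intro f hf <;> simp only [Finset.mem_filter, Finset.mem_univ, true_and] at hf ⊢
        · exact C.src_t e f hf
        · rw [C.src_t _ f (hf.trans hrev.symm), G.dst_rev]
        · exact C.t_inv e f hf
        · simpa [G.rev_rev] using C.t_inv (G.rev e) f (hf.trans hrev.symm)
    _ = ∑ f ∈ Finset.univ.filter (fun f => G.src f = G.src e), (α f + c f • α e) := by
        refine Finset.sum_congr rfl fun f hf => hc f ?_
        simpa using hf
    _ = _ := by rw [Finset.sum_add_distrib, ← Finset.sum_smul]; rfl

lemma toC_add (a b : Zm 2) : toC (a + b) = toC a + toC b := by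
  simp only [toC, Pi.add_apply]; push_cast; ring

/-- Three labels summing to zero, two of them independent, span `ℝ²` as a cone: write
`x = a U + b V` and add `t (U + V + W) = 0` with `t` large enough. -/
lemma interiorVtx_of_vertexSum_eq_zero {G : OrGraph} {α : G.E → Zm 2} {p : G.V}
    {e₁ e₂ e₃ : G.E} (hp : Finset.univ.filter (fun e => G.src e = p) = {e₁, e₂, e₃})
    (h₁₂ : e₁ ≠ e₂) (h₁₃ : e₁ ≠ e₃) (h₂₃ : e₂ ≠ e₃) (hdet : det2 (α e₁) (α e₂) ≠ 0)
    (hsum : vertexSum G α p = 0) : InteriorVtx G α p := by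
  intro x
  rw [vertexSum, hp, Finset.sum_insert (by simp [h₁₂, h₁₃]), Finset.sum_pair h₂₃] at hsum
  set U := toC (α e₁)
  set V := toC (α e₂)
  have hW : toC (α e₃) = -U - V := by
    have := congrArg toC hsum
    rw [toC_add, toC_add, show toC 0 = 0 by simp [toC]] at this
    linear_combination this
  set D : ℝ := U.re * V.im - U.im * V.re
  have hD : D ≠ 0 := by
    have : D = ((det2 (α e₁) (α e₂) : ℤ) : ℝ) := by
      simp [D, U, V, toC, det2_apply]
    rw [this]; exact_mod_cast hdet
  set a := (x.re * V.im - x.im * V.re) / D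
  set b := (U.re * x.im - U.im * x.re) / D
  have hx : x = a • U + b • V := by
    apply Complex.ext <;> simp [a, b] <;> field_simp <;> ring
  set t := max (max (-a) (-b)) 0
  refine ⟨fun e => if e = e₁ then a + t else if e = e₂ then b + t else if e = e₃ then t else 0,
    fun e => ?_, ?_⟩
  · have := le_max_left (max (-a) (-b)) 0
    have := le_max_left (-a) (-b)
    have := le_max_right (-a) (-b)
    have := le_max_right (max (-a) (-b)) 0
    dsimp only
    split_ifs <;> linarith
  · rw [hp, Finset.sum_insert (by simp [h₁₂, h₁₃]), Finset.sum_pair h₂₃]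
    simp only [if_neg h₁₂.symm, if_neg h₁₃.symm, if_neg h₂₃.symm]
    rw [hW, hx]
    simp only [Complex.real_smul]
    push_cast
    ring

/-- The sign picked up when an index crosses `0`; the lift of a loop around the base
comes back with the two basic edges interchanged. -/
def twist {n : ℕ} (i : ZMod n) : ℤ := if i = 0 then -1 else 1

lemma twist_mul_self {n : ℕ} (i : ZMod n) : twist i * twist i = 1 := by
  unfold twist; split_ifs <;> norm_num

lemma isUnit_twist {n : ℕ} (i : ZMod n) : IsUnit (twist i) := by
  unfold twist; split_ifs <;> simp

lemma ite_neg_eq_twist_mul {n : ℕ} (x : ZMod n → ℤ) (i : ZMod n) :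
    (if i = 0 then -x (i - 1) else x (i - 1)) = twist i * x (i - 1) := by
  unfold twist; split_ifs <;> ring

lemma apply_eq_apply_zero_of_apply_sub_one {n : ℕ} [NeZero n] {β : Type*} {x : ZMod n → β}
    (h : ∀ i, x (i - 1) = x i) (i : ZMod n) : x i = x 0 := by
  have key : ∀ m : ℕ, x m = x 0 := by
    intro m
    induction m with
    | zero => simp
    | succ m ih => rw [← ih, ← h]; push_cast; ring_nf
  rw [← ZMod.natCast_zmod_val i, key]

lemma val_le_val_neg_one {n : ℕ} [NeZero n] [Fact (1 < n)] (j : ZMod n) :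
    j.val ≤ (-1 : ZMod n).val := by
  rw [ZMod.val_neg_of_ne_zero, ZMod.val_one]
  have := ZMod.val_lt j
  omega

lemma val_sub_one_of_ne_zero {n : ℕ} [NeZero n] {i : ZMod n} (hi : i ≠ 0) :
    (i - 1).val = i.val - 1 := by
  have hpos := ZMod.val_pos.mpr hi
  have : i - 1 = ((i.val - 1 : ℕ) : ZMod n) := by
    rw [Nat.cast_sub hpos, ZMod.natCast_zmod_val, Nat.cast_one]
  rw [this, ZMod.val_cast_of_lt (by have := ZMod.val_lt i; omega)]

lemma nonempty_signedGKMIso_of_eq_smul {m : ℕ} {G : OrGraph} {α α' : G.E → Zm m} {v : ℤ}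
    (hv : IsUnit v) (h : ∀ ed, α' ed = v • α ed) : Nonempty (SignedGKMIso G α G α') :=
  ⟨⟨Equiv.refl _, Equiv.refl _, DistribMulAction.toLinearEquiv ℤ (Zm m) hv.unit,
    fun _ => rfl, fun _ => rfl, fun _ => rfl, fun ed => by simpa [Units.smul_def] using h ed⟩⟩

namespace Section7

variable (S : Section7)

instance : NeZero S.n := ⟨by have := S.hn; omega⟩

instance : Fact (1 < S.n) := ⟨by have := S.hn; omega⟩

def γ (i : ZMod S.n) : Zm 2 := S.aB (S.e i)

lemma two_ne_zero_zmod : (2 : ZMod S.n) ≠ 0 := by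
  have := S.hn
  intro h
  have := (ZMod.natCast_eq_zero_iff 2 S.n).mp (by exact_mod_cast h)
  exact absurd (Nat.le_of_dvd two_pos this) (by omega)

lemma e_ne_rev_e_sub_one (i : ZMod S.n) : S.e i ≠ S.B.rev (S.e (i - 1)) := by
  intro h
  have h' := S.v_bij.1 (by simpa [S.dst_e, S.B.dst_rev, S.src_e] using congrArg S.B.dst h)
  exact S.two_ne_zero_zmod (by linear_combination h')

lemma det2_γ_ne_zero (i : ZMod S.n) : det2 (S.γ (i - 1)) (S.γ i) ≠ 0 := by
  rcases S.delzant i with h | h <;> simp [γ, det2_apply, h]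

lemma γ_ne_zero (i : ZMod S.n) : S.γ i ≠ 0 := fun h =>
  S.det2_γ_ne_zero i (by simp [h])

lemma vertexSum_base (i : ZMod S.n) :
    vertexSum S.B S.aB (S.v i) = S.γ i - S.γ (i - 1) := by
  obtain ⟨hreg, -, CB, hCB⟩ := S.hB
  have hsrc : S.B.src (S.B.rev (S.e (i - 1))) = S.v i := by
    rw [S.B.src_rev, S.dst_e, sub_add_cancel]
  rw [vertexSum, OrGraph.filter_src_eq hreg (s := {S.e i, S.B.rev (S.e (i - 1))})
    (by simp [S.src_e, hsrc]) (Finset.card_pair (S.e_ne_rev_e_sub_one i)),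
    Finset.sum_pair (S.e_ne_rev_e_sub_one i), hCB.2.2, sub_eq_add_neg]
  rfl

/-- Transport along `e i` gives `γ (i + 1) ≡ -γ (i - 1)` modulo `γ i`. -/
lemma det2_γ_succ (i : ZMod S.n) :
    det2 (S.γ i) (S.γ (i + 1)) = det2 (S.γ (i - 1)) (S.γ i) := by
  obtain ⟨-, -, CB, hCB⟩ := S.hB
  obtain ⟨c, hc⟩ := hCB.exists_vertexSum_dst (S.e i)
  rw [S.dst_e, S.src_e, S.vertexSum_base, S.vertexSum_base, add_sub_cancel_right] at hc
  have := congrArg (det2 (S.γ i)) hc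
  simp only [map_sub, map_add, map_smul, smul_eq_mul] at this
  rw [show S.aB (S.e i) = S.γ i from rfl, det2_self, det2_swap (S.γ (i - 1))] at this
  linarith

def p (i : ZMod S.n) : S.G.V := S.G.src (S.f i)

def q (i : ZMod S.n) : S.G.V := S.G.src (S.h i)

/-- The third edge at `p i`; it lies over `e (i - 1)`, and comes from `h` instead of `f`
at `i = 0` because of the twist. -/
noncomputable def b (i : ZMod S.n) : S.G.E :=
  if i = 0 then S.G.rev (S.h (i - 1)) else S.G.rev (S.f (i - 1))

noncomputable def c (i : ZMod S.n) : S.G.E :=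
  if i = 0 then S.G.rev (S.f (i - 1)) else S.G.rev (S.h (i - 1))

lemma dst_f_sub_one (i : ZMod S.n) : S.G.dst (S.f (i - 1)) = if i = 0 then S.q i else S.p i := by
  split_ifs with hi
  · subst hi; rw [zero_sub]; exact S.twist_f
  · simpa [p] using S.chain_f (i - 1) (by simpa using hi)

lemma dst_h_sub_one (i : ZMod S.n) : S.G.dst (S.h (i - 1)) = if i = 0 then S.p i else S.q i := by
  split_ifs with hi
  · subst hi; rw [zero_sub]; exact S.twist_h
  · simpa [q] using S.chain_h (i - 1) (by simpa using hi)

lemma src_b (i : ZMod S.n) : S.G.src (S.b i) = S.p i := by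
  unfold b; split_ifs with hi <;> rw [S.G.src_rev]
  · simpa [hi] using S.dst_h_sub_one i
  · simpa [hi] using S.dst_f_sub_one i

lemma src_c (i : ZMod S.n) : S.G.src (S.c i) = S.q i := by
  unfold c; split_ifs with hi <;> rw [S.G.src_rev]
  · simpa [hi] using S.dst_f_sub_one i
  · simpa [hi] using S.dst_h_sub_one i

lemma src_rev_g (i : ZMod S.n) : S.G.src (S.G.rev (S.g i)) = S.q i := by
  rw [S.G.src_rev, S.g_dst]; rfl

lemma not_vertical_b (i : ZMod S.n) : ¬ S.π.Vertical (S.b i) := by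
  unfold b; split_ifs <;> simp only [GraphFib.Vertical, S.G.src_rev, S.G.dst_rev] <;>
    exact fun h => by first | exact S.h_horiz _ h.symm | exact S.f_horiz _ h.symm

lemma not_vertical_c (i : ZMod S.n) : ¬ S.π.Vertical (S.c i) := by
  unfold c; split_ifs <;> simp only [GraphFib.Vertical, S.G.src_rev, S.G.dst_rev] <;>
    exact fun h => by first | exact S.h_horiz _ h.symm | exact S.f_horiz _ h.symm

lemma onE_b (i : ZMod S.n) : S.π.onE (S.b i) = S.B.rev (S.e (i - 1)) := by
  unfold b; split_ifs
  · rw [S.π.rev_onE _ (S.h_horiz _), S.h_over]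
  · rw [S.π.rev_onE _ (S.f_horiz _), S.f_over]

lemma onE_c (i : ZMod S.n) : S.π.onE (S.c i) = S.B.rev (S.e (i - 1)) := by
  unfold c; split_ifs
  · rw [S.π.rev_onE _ (S.f_horiz _), S.f_over]
  · rw [S.π.rev_onE _ (S.h_horiz _), S.h_over]

lemma f_ne_g (i : ZMod S.n) : S.f i ≠ S.g i := fun h => S.f_horiz i (h ▸ S.g_vert i)

lemma f_ne_b (i : ZMod S.n) : S.f i ≠ S.b i := fun h =>
  S.e_ne_rev_e_sub_one i (by rw [← S.f_over, ← S.onE_b, h])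

lemma g_ne_b (i : ZMod S.n) : S.g i ≠ S.b i := fun h => S.not_vertical_b i (h ▸ S.g_vert i)

lemma vertical_rev_g (i : ZMod S.n) : S.π.Vertical (S.G.rev (S.g i)) := by
  have := S.g_vert i
  simp only [GraphFib.Vertical, S.G.src_rev, S.G.dst_rev] at this ⊢
  exact this.symm

lemma h_ne_rev_g (i : ZMod S.n) : S.h i ≠ S.G.rev (S.g i) := fun h =>
  S.h_horiz i (h ▸ S.vertical_rev_g i)

lemma h_ne_c (i : ZMod S.n) : S.h i ≠ S.c i := fun h =>
  S.e_ne_rev_e_sub_one i (by rw [← S.h_over, ← S.onE_c, h])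

lemma rev_g_ne_c (i : ZMod S.n) : S.G.rev (S.g i) ≠ S.c i := fun h =>
  S.not_vertical_c i (h ▸ S.vertical_rev_g i)

lemma edges_at_p (i : ZMod S.n) :
    Finset.univ.filter (fun ed => S.G.src ed = S.p i) = {S.f i, S.g i, S.b i} :=
  OrGraph.filter_src_eq S.hG.1 (by simp [S.g_src, S.src_b, p])
    (Finset.card_eq_three.mpr ⟨_, _, _, S.f_ne_g i, S.f_ne_b i, S.g_ne_b i, rfl⟩)

lemma edges_at_q (i : ZMod S.n) :
    Finset.univ.filter (fun ed => S.G.src ed = S.q i) = {S.h i, S.G.rev (S.g i), S.c i} :=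
  OrGraph.filter_src_eq S.hG.1 (by simp [S.src_rev_g, S.src_c, q])
    (Finset.card_eq_three.mpr ⟨_, _, _, S.h_ne_rev_g i, S.h_ne_c i, S.rev_g_ne_c i, rfl⟩)

lemma eq_f_or_g_or_b {i : ZMod S.n} {ed : S.G.E} (hed : S.G.src ed = S.p i) :
    ed = S.f i ∨ ed = S.g i ∨ ed = S.b i := by
  simpa using (Finset.ext_iff.mp (S.edges_at_p i) ed).mp (by simpa using hed)

lemma eq_h_or_rev_g_or_c {i : ZMod S.n} {ed : S.G.E} (hed : S.G.src ed = S.q i) :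
    ed = S.h i ∨ ed = S.G.rev (S.g i) ∨ ed = S.c i := by
  simpa using (Finset.ext_iff.mp (S.edges_at_q i) ed).mp (by simpa using hed)

lemma exists_eq_p_or_eq_q (w : S.G.V) : ∃ i, w = S.p i ∨ w = S.q i := by
  have hf (i : ZMod S.n) := S.dst_f_sub_one (i + 1)
  have hh (i : ZMod S.n) := S.dst_h_sub_one (i + 1)
  simp only [add_sub_cancel_right] at hf hh
  induction S.hG.2.1 (S.p 0) w with
  | refl => exact ⟨0, Or.inl rfl⟩
  | tail _ hadj ih =>
    obtain ⟨i, hi | hi⟩ := ih <;> obtain ⟨ed, rfl, rfl⟩ := hadj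
    · rcases S.eq_f_or_g_or_b hi with rfl | rfl | rfl
      · rw [hf]; split_ifs
        exacts [⟨_, Or.inr rfl⟩, ⟨_, Or.inl rfl⟩]
      · exact ⟨i, Or.inr (S.g_dst i)⟩
      · unfold b; split_ifs <;> rw [S.G.dst_rev]
        exacts [⟨_, Or.inr rfl⟩, ⟨_, Or.inl rfl⟩]
    · rcases S.eq_h_or_rev_g_or_c hi with rfl | rfl | rfl
      · rw [hh]; split_ifs
        exacts [⟨_, Or.inl rfl⟩, ⟨_, Or.inr rfl⟩]
      · exact ⟨i, Or.inl (by rw [S.G.dst_rev, S.g_src]; rfl)⟩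
      · unfold c; split_ifs <;> rw [S.G.dst_rev]
        exacts [⟨_, Or.inl rfl⟩, ⟨_, Or.inr rfl⟩]

lemma labels_ext {α₁ α₂ : S.G.E → Zm 2}
    (h₁ : ∀ ed, α₁ (S.G.rev ed) = -α₁ ed) (h₂ : ∀ ed, α₂ (S.G.rev ed) = -α₂ ed)
    (hf : ∀ i, α₁ (S.f i) = α₂ (S.f i)) (hh : ∀ i, α₁ (S.h i) = α₂ (S.h i))
    (hg : ∀ i, α₁ (S.g i) = α₂ (S.g i)) : α₁ = α₂ := by
  funext ed
  obtain ⟨i, hi | hi⟩ := S.exists_eq_p_or_eq_q (S.G.src ed)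
  · rcases S.eq_f_or_g_or_b hi with rfl | rfl | rfl
    · exact hf i
    · exact hg i
    · unfold b; split_ifs <;> simp [h₁, h₂, hf, hh]
  · rcases S.eq_h_or_rev_g_or_c hi with rfl | rfl | rfl
    · exact hh i
    · rw [h₁, h₂, hg]
    · unfold c; split_ifs <;> simp [h₁, h₂, hf, hh]

lemma aG_f (i : ZMod S.n) : S.aG (S.f i) = S.γ i := by
  obtain ⟨-, _, _, -, -, hcomp⟩ := S.hfib
  rw [hcomp.1 _ (S.f_horiz i), S.f_over]; rfl

lemma aG_h (i : ZMod S.n) : S.aG (S.h i) = S.γ i := by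
  obtain ⟨-, _, _, -, -, hcomp⟩ := S.hfib
  rw [hcomp.1 _ (S.h_horiz i), S.h_over]; rfl

/-- The paper's `k_{i-1}`, with its convention `k_0 = -k_n` across the twist. -/
def kPrev (i : ZMod S.n) : ℤ := twist i * S.k (i - 1)

def JumpsOnceAt (j : ZMod S.n) : Prop :=
  (∀ i, IsUnit (S.k i)) ∧ S.k j ≠ S.kPrev j ∧ ∀ i, i ≠ j → S.k i = S.kPrev i

lemma aG_g (i : ZMod S.n) : S.aG (S.g i) = S.k i • S.γ (i - 1) - S.kPrev i • S.γ i := by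
  rw [S.fiberweight, ite_neg_eq_twist_mul]; rfl

lemma vertexSum_p (α : S.G.E → Zm 2) (i : ZMod S.n) :
    vertexSum S.G α (S.p i) = α (S.f i) + α (S.g i) + α (S.b i) := by
  rw [vertexSum, S.edges_at_p, Finset.sum_insert (by simp [S.f_ne_g i, S.f_ne_b i]),
    Finset.sum_pair (S.g_ne_b i), add_assoc]

lemma vertexSum_q (α : S.G.E → Zm 2) (i : ZMod S.n) :
    vertexSum S.G α (S.q i) = α (S.h i) + α (S.G.rev (S.g i)) + α (S.c i) := by
  rw [vertexSum, S.edges_at_q, Finset.sum_insert (by simp [S.h_ne_rev_g i, S.h_ne_c i]),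
    Finset.sum_pair (S.rev_g_ne_c i), add_assoc]

def IsTypeIII (α : S.G.E → Zm 2) : Prop :=
  (∃ C : Connection S.G, SignedCompat S.G α C) ∧ (∀ ed, pm (α ed) = pm (S.aG ed)) ∧
    ∀ i, α (S.f i) ≠ α (S.h i)

noncomputable def fSign (α : S.G.E → Zm 2) (i : ZMod S.n) : ℤ :=
  if α (S.f i) = S.γ i then 1 else -1

noncomputable def gSign (α : S.G.E → Zm 2) (i : ZMod S.n) : ℤ :=
  if α (S.g i) = S.aG (S.g i) then 1 else -1

lemma isUnit_fSign (α : S.G.E → Zm 2) (i : ZMod S.n) : IsUnit (S.fSign α i) := by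
  unfold fSign; split_ifs <;> simp

lemma isUnit_gSign (α : S.G.E → Zm 2) (i : ZMod S.n) : IsUnit (S.gSign α i) := by
  unfold gSign; split_ifs <;> simp

namespace IsTypeIII

variable {S} {α : S.G.E → Zm 2}

lemma map_rev (hα : S.IsTypeIII α) (ed : S.G.E) : α (S.G.rev ed) = -α ed := by
  obtain ⟨⟨C, hC⟩, -⟩ := hα
  exact hC.2.2 ed

lemma map_f (hα : S.IsTypeIII α) (i : ZMod S.n) : α (S.f i) = S.fSign α i • S.γ i := by
  unfold fSign
  rcases pm_eq_pm_iff.mp (hα.2.1 (S.f i)) with h | h <;> rw [S.aG_f] at h <;> simp [h]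

lemma map_h (hα : S.IsTypeIII α) (i : ZMod S.n) : α (S.h i) = -α (S.f i) := by
  have hf := pm_eq_pm_iff.mp (hα.2.1 (S.f i))
  have hh := pm_eq_pm_iff.mp (hα.2.1 (S.h i))
  rw [S.aG_f] at hf
  rw [S.aG_h] at hh
  have hne := hα.2.2 i
  rcases hf with hf | hf <;> rcases hh with hh | hh <;> simp_all

lemma map_g (hα : S.IsTypeIII α) (i : ZMod S.n) : α (S.g i) = S.gSign α i • S.aG (S.g i) := by
  unfold gSign
  rcases pm_eq_pm_iff.mp (hα.2.1 (S.g i)) with h | h <;> simp [h]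

lemma map_b (hα : S.IsTypeIII α) (i : ZMod S.n) :
    α (S.b i) = -(twist i • α (S.f (i - 1))) := by
  unfold b twist; split_ifs <;> simp [hα.map_rev, hα.map_h]

lemma map_c (hα : S.IsTypeIII α) (i : ZMod S.n) : α (S.c i) = -α (S.b i) := by
  unfold b c; split_ifs <;> simp [hα.map_rev, hα.map_h]

lemma vertexSum_q_eq_neg (hα : S.IsTypeIII α) (i : ZMod S.n) :
    vertexSum S.G α (S.q i) = -vertexSum S.G α (S.p i) := by
  rw [S.vertexSum_q, S.vertexSum_p, hα.map_h, hα.map_rev, hα.map_c]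
  abel

lemma vertexSum_p_eq_smul_add_smul (hα : S.IsTypeIII α) (i : ZMod S.n) :
    vertexSum S.G α (S.p i) =
      (S.gSign α i * S.k i - twist i * S.fSign α (i - 1)) • S.γ (i - 1) +
        (S.fSign α i - S.gSign α i * S.kPrev i) • S.γ i := by
  rw [S.vertexSum_p, hα.map_b, hα.map_f, hα.map_f, hα.map_g, S.aG_g]
  module

/-- Transport along the fiber edge `g i` from `p i` to `q i`, where the label sum is negated. -/
lemma fSign_sub_one_mul_k (hα : S.IsTypeIII α) (i : ZMod S.n) :
    S.fSign α (i - 1) * S.k (i - 1) = S.fSign α i * S.k i := by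
  obtain ⟨C, hC⟩ := hα.1
  obtain ⟨c, hc⟩ := hC.exists_vertexSum_dst (S.g i)
  rw [S.g_dst, S.g_src, ← q, ← p, hα.vertexSum_q_eq_neg] at hc
  have h := congrArg (det2 · (α (S.g i))) hc
  simp only [map_neg, map_add, map_smul, LinearMap.neg_apply, LinearMap.add_apply,
    LinearMap.smul_apply, det2_self, smul_eq_mul, mul_zero, add_zero] at h
  rw [hα.vertexSum_p_eq_smul_add_smul, hα.map_g, S.aG_g] at h
  simp only [map_add, map_sub, map_smul, LinearMap.add_apply,
    LinearMap.smul_apply, det2_self, smul_eq_mul] at h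
  rw [det2_swap (S.γ (i - 1)), kPrev] at h
  have key : (S.fSign α i * S.k i - S.fSign α (i - 1) * S.k (i - 1)) *
      (2 * S.gSign α i * det2 (S.γ (i - 1)) (S.γ i)) = 0 := by
    linear_combination h + 2 * S.gSign α i * det2 (S.γ (i - 1)) (S.γ i) * S.fSign α (i - 1) *
      S.k (i - 1) * twist_mul_self i
  have hne : 2 * S.gSign α i * det2 (S.γ (i - 1)) (S.γ i) ≠ 0 :=
    mul_ne_zero (mul_ne_zero two_ne_zero (S.isUnit_gSign α i).ne_zero) (S.det2_γ_ne_zero i)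
  linear_combination -(mul_eq_zero.mp key).resolve_right hne

/-- Transport along the basic edge `f (i - 1)`, which ends at `p i`, or at `q 0` if `i = 0`. -/
lemma transport_f (hα : S.IsTypeIII α) (i : ZMod S.n) :
    S.gSign α (i - 1) * S.k (i - 1) - twist (i - 1) * S.fSign α (i - 1 - 1) =
      -(twist i * (S.fSign α i - S.gSign α i * S.kPrev i)) := by
  obtain ⟨C, hC⟩ := hα.1
  obtain ⟨c, hc⟩ := hC.exists_vertexSum_dst (S.f (i - 1))
  have hdst : vertexSum S.G α (S.G.dst (S.f (i - 1))) = twist i • vertexSum S.G α (S.p i) := by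
    rw [S.dst_f_sub_one, twist]; split_ifs <;> simp [hα.vertexSum_q_eq_neg]
  rw [hdst, ← p, hα.map_f] at hc
  have h := congrArg (det2 · (S.γ (i - 1))) hc
  simp only [hα.vertexSum_p_eq_smul_add_smul, map_add, map_smul, LinearMap.add_apply, LinearMap.smul_apply,
    det2_self, smul_eq_mul, mul_zero, add_zero] at h
  rw [det2_swap (S.γ (i - 1)), ← S.det2_γ_succ (i - 1), sub_add_cancel] at h
  refine mul_right_cancel₀ (S.det2_γ_ne_zero i) ?_
  linear_combination -h

lemma fSign_eq (hα : S.IsTypeIII α) (hk : ∀ i, IsUnit (S.k i)) (i : ZMod S.n) :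
    S.fSign α i = S.fSign α 0 * S.k 0 * S.k i := by
  rw [← apply_eq_apply_zero_of_apply_sub_one (x := fun m => S.fSign α m * S.k m)
    hα.fSign_sub_one_mul_k i, mul_assoc, Int.isUnit_mul_self (hk i), mul_one]

lemma k_mul_kPrev_sub_gSign (hα : S.IsTypeIII α) (hk : ∀ i, IsUnit (S.k i)) (i : ZMod S.n) :
    S.k (i - 1) * S.kPrev (i - 1) - S.fSign α 0 * S.k 0 * S.gSign α (i - 1) =
      S.k i * S.kPrev i - S.fSign α 0 * S.k 0 * S.gSign α i := by
  have h := hα.transport_f i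
  rw [hα.fSign_eq hk (i - 1 - 1), hα.fSign_eq hk i] at h
  set u := S.fSign α 0 * S.k 0
  have hu : u * u = 1 := Int.isUnit_mul_self ((S.isUnit_fSign α 0).mul (hk 0))
  have hk' := Int.isUnit_mul_self (hk (i - 1))
  unfold kPrev at h ⊢
  linear_combination (-(u * S.k (i - 1))) * h
    - S.k (i - 1) * twist (i - 1) * S.k (i - 1 - 1) * hu + u * S.gSign α (i - 1) * hk'
    + S.k i * twist i * S.k (i - 1) * hu - u * S.gSign α i * twist_mul_self i
    - u * S.gSign α i * twist i * twist i * hk'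

/-- With `u = fSign α 0 * k 0`, the quantity `k i * kPrev i - u * gSign α i` is independent
of `i`; since `k i * kPrev i` is `-1` at `j` and `1` elsewhere while `u * gSign α i = ±1`,
it vanishes. -/
lemma gSign_eq (hα : S.IsTypeIII α) {j : ZMod S.n} (hjump : S.JumpsOnceAt j) (i : ZMod S.n) :
    S.gSign α i = S.fSign α 0 * S.k 0 * S.k i * S.kPrev i := by
  obtain ⟨hk, hj, hjuniq⟩ := hjump
  set u := S.fSign α 0 * S.k 0
  have hconst (m : ZMod S.n) := apply_eq_apply_zero_of_apply_sub_one
    (x := fun m => S.k m * S.kPrev m - u * S.gSign α m) (hα.k_mul_kPrev_sub_gSign hk) m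
  have hunit (m : ZMod S.n) : u * S.gSign α m = 1 ∨ u * S.gSign α m = -1 :=
    Int.isUnit_iff.mp (((S.isUnit_fSign α 0).mul (hk 0)).mul (S.isUnit_gSign α m))
  have hjump : S.k j * S.kPrev j = -1 := by
    rcases Int.isUnit_iff.mp (hk j) with h | h <;>
      rcases Int.isUnit_iff.mp ((isUnit_twist j).mul (hk (j - 1))) with h' | h' <;>
      simp_all [kPrev]
  have hflat : S.k (j + 1) * S.kPrev (j + 1) = 1 := by
    rw [hjuniq (j + 1) (by simp)]
    exact Int.isUnit_mul_self ((isUnit_twist _).mul (hk _))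
  have hzero : S.k i * S.kPrev i - u * S.gSign α i = 0 := by
    have := hconst i
    have := hconst j
    have := hconst (j + 1)
    have := hunit j
    have := hunit (j + 1)
    omega
  have hu : u * u = 1 := Int.isUnit_mul_self ((S.isUnit_fSign α 0).mul (hk 0))
  linear_combination -u * hzero - S.gSign α i * hu

lemma vertexSum_p_eq_zero (hα : S.IsTypeIII α) {j : ZMod S.n} (hjump : S.JumpsOnceAt j)
    (i : ZMod S.n) : vertexSum S.G α (S.p i) = 0 := by
  have hk := hjump.1
  rw [hα.vertexSum_p_eq_smul_add_smul, hα.gSign_eq hjump, hα.fSign_eq hk i, hα.fSign_eq hk (i - 1), kPrev]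
  have key (a b : ℤ) (ha : a = 0) (hb : b = 0) : a • S.γ (i - 1) + b • S.γ i = 0 := by
    simp [ha, hb]
  apply key
  · linear_combination S.fSign α 0 * S.k 0 * twist i * S.k (i - 1) * Int.isUnit_mul_self (hk i)
  · linear_combination -(S.fSign α 0 * S.k 0 * S.k i) * twist_mul_self i
      - S.fSign α 0 * S.k 0 * S.k i * twist i * twist i * Int.isUnit_mul_self (hk (i - 1))

lemma map_g_eq (hα : S.IsTypeIII α) {j : ZMod S.n} (hjump : S.JumpsOnceAt j) (i : ZMod S.n) :
    α (S.g i) = twist i • α (S.f (i - 1)) - α (S.f i) := by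
  have h := hα.vertexSum_p_eq_zero hjump i
  rw [S.vertexSum_p, hα.map_b] at h
  linear_combination (exp := 1) h

lemma interiorVtx (hα : S.IsTypeIII α) {j : ZMod S.n} (hjump : S.JumpsOnceAt j) (w : S.G.V) :
    InteriorVtx S.G α w := by
  obtain ⟨C, hC⟩ := hα.1
  have hp := hα.vertexSum_p_eq_zero hjump
  obtain ⟨i, rfl | rfl⟩ := S.exists_eq_p_or_eq_q w
  · exact interiorVtx_of_vertexSum_eq_zero (S.edges_at_p i) (S.f_ne_g i) (S.f_ne_b i)
      (S.g_ne_b i) (hC.1 _ _ (S.g_src i) (S.f_ne_g i)).det2_ne_zero (hp i)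
  · exact interiorVtx_of_vertexSum_eq_zero (S.edges_at_q i) (S.h_ne_rev_g i) (S.h_ne_c i)
      (S.rev_g_ne_c i) (hC.1 _ _ (S.src_rev_g i) (S.h_ne_rev_g i)).det2_ne_zero
      (by rw [hα.vertexSum_q_eq_neg, hp, neg_zero])

lemma exists_eq_smul (hα : S.IsTypeIII α) {α' : S.G.E → Zm 2} (hα' : S.IsTypeIII α')
    {j : ZMod S.n} (hjump : S.JumpsOnceAt j) : ∃ v : ℤ, IsUnit v ∧ ∀ ed, α ed = v • α' ed := by
  have hk := hjump.1
  have hu' : IsUnit (S.fSign α' 0 * S.k 0) := (S.isUnit_fSign α' 0).mul (hk 0)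
  set v := S.fSign α 0 * S.k 0 * (S.fSign α' 0 * S.k 0)
  have hf (i : ZMod S.n) : α (S.f i) = v • α' (S.f i) := by
    rw [hα.map_f, hα'.map_f, hα.fSign_eq hk, hα'.fSign_eq hk, smul_smul]
    congr 1
    linear_combination -(S.fSign α 0 * S.k 0 * S.k i) * Int.isUnit_mul_self hu'
  refine ⟨v, ((S.isUnit_fSign α 0).mul (hk 0)).mul hu', fun ed => congrFun
    (S.labels_ext (α₂ := fun ed => v • α' ed) hα.map_rev (fun ed => by simp [hα'.map_rev])
      hf (fun i => ?_) (fun i => ?_)) ed⟩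
  · simp only [hα.map_h, hα'.map_h, hf i, smul_neg]
  · simp only [hα.map_g_eq hjump, hα'.map_g_eq hjump, hf, smul_sub, smul_comm v]

lemma map_g_of_map_f_eq (hα : S.IsTypeIII α) {j : ZMod S.n} (hjump : S.JumpsOnceAt j)
    (hf : ∀ i, α (S.f i) = if i.val < j.val then -S.γ i else S.γ i) :
    α (S.g j) = -S.γ (j - 1) - S.γ j ∧
      (∀ i, j.val < i.val → α (S.g i) = S.γ (i - 1) - S.γ i) ∧
      (∀ i, i.val < j.val → α (S.g i) = -S.γ (i - 1) + S.γ i) := by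
  have hf_lt {i : ZMod S.n} (hi : i.val < j.val) : α (S.f i) = -S.γ i := by rw [hf, if_pos hi]
  have hf_ge {i : ZMod S.n} (hi : j.val ≤ i.val) : α (S.f i) = S.γ i := by
    rw [hf, if_neg (not_lt.mpr hi)]
  have hf_pred {i : ZMod S.n} (hi : i ≠ 0) :
      α (S.f (i - 1)) = if i.val ≤ j.val then -S.γ (i - 1) else S.γ (i - 1) := by
    have := ZMod.val_pos.mpr hi
    rw [hf, val_sub_one_of_ne_zero hi]
    congr 1
    exact propext (by omega)
  have hf_neg_one : α (S.f (-1)) = S.γ (-1) := hf_ge (val_le_val_neg_one j)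
  simp only [hα.map_g_eq hjump, twist]
  refine ⟨?_, fun i hi => ?_, fun i hi => ?_⟩
  · rw [hf_ge le_rfl]
    by_cases hj0 : j = 0
    · subst hj0
      simp [hf_neg_one]
    · simp [hj0, hf_pred hj0]
  · have hi0 : i ≠ 0 := by rintro rfl; simp at hi
    simp [hi0, hf_pred hi0, hf_ge hi.le, not_le.mpr hi]
  · rw [hf_lt hi]
    by_cases hi0 : i = 0
    · subst hi0
      simp [hf_neg_one, sub_neg_eq_add]
    · simp [hi0, hf_pred hi0, hi.le]

end IsTypeIII

end Section7

/-- in the Section 7 setting, a normalized type III signed structure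
has uniquely determined fiber weights, is unique up to isomorphism, and all its
vertices are interior. -/
theorem statement16 (S : Section7) (j : ZMod S.n)
    (hk1 : ∀ i, S.k i = 1 ∨ S.k i = -1)
    (hj : S.k j ≠ (if j = 0 then - S.k (j - 1) else S.k (j - 1)))
    (hjuniq : ∀ i, i ≠ j → S.k i = (if i = 0 then - S.k (i - 1) else S.k (i - 1)))
    (α' : S.G.E → Zm 2)
    (hcompat : ∃ C : Connection S.G, SignedCompat S.G α' C)
    (hsame : ∀ ed, pm (α' ed) = pm (S.aG ed))
    (hf : ∀ i : ZMod S.n, α' (S.f i) =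
      (if i.val < j.val then - S.aB (S.e i) else S.aB (S.e i)))
    (hh : ∀ i : ZMod S.n, α' (S.h i) = - α' (S.f i)) :
    (α' (S.g j) = - S.aB (S.e (j - 1)) - S.aB (S.e j)) ∧
    (∀ i : ZMod S.n, j.val < i.val → α' (S.g i) = S.aB (S.e (i - 1)) - S.aB (S.e i)) ∧
    (∀ i : ZMod S.n, i.val < j.val → α' (S.g i) = - S.aB (S.e (i - 1)) + S.aB (S.e i)) ∧
    (∀ p : S.G.V, InteriorVtx S.G α' p) ∧
    (∀ α'' : S.G.E → Zm 2, (∃ C : Connection S.G, SignedCompat S.G α'' C) →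
      (∀ ed, pm (α'' ed) = pm (S.aG ed)) → (∀ i, α'' (S.f i) ≠ α'' (S.h i)) →
      Nonempty (SignedGKMIso S.G α'' S.G α')) := by
  simp only [ite_neg_eq_twist_mul] at hj hjuniq
  have hjump : S.JumpsOnceAt j := ⟨fun i => Int.isUnit_iff.mpr (hk1 i), hj, hjuniq⟩
  have hα' : S.IsTypeIII α' := by
    refine ⟨hcompat, hsame, fun i hfh => ?_⟩
    rw [hh, eq_neg_iff_add_eq_zero, ← two_smul ℤ, smul_eq_zero, hf] at hfh
    split_ifs at hfh <;> exact S.γ_ne_zero i (by simpa [Section7.γ] using hfh)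
  obtain ⟨hgj, hg_gt, hg_lt⟩ := hα'.map_g_of_map_f_eq hjump hf
  refine ⟨hgj, hg_gt, hg_lt, hα'.interiorVtx hjump, fun α'' hcompat'' hsame'' hfh'' => ?_⟩
  obtain ⟨v, hv, hα'v⟩ := hα'.exists_eq_smul ⟨hcompat'', hsame'', hfh''⟩ hjump
  exact nonempty_signedGKMIso_of_eq_smul hv hα'v

end GKMPaper
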